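/- arXiv:2507.00213 — 2 statements merged into one kernel-verified Lean document; each statement's English description precedes it below -/
import Mathlib

section
/- The Möbius ladder M4 on 8 vertices has no Hamiltonian cycle containing exactly one of the four rungs. -/
open SimpleGraph

/-- The Möbius ladder on 8 vertices: cycle edges `{i, i+1}` and rungs `{i, i+4}`. -/
def M4 : SimpleGraph (Fin 8) :=
  SimpleGraph.fromRel (fun i j => j = i + 1 ∨ j = i + 4)

/-- An edge of `M4` is a rung if it has the form `{i, i+4}`. -/
def IsRung (e : Sym2 (Fin 8)) : Prop := ∃ i : Fin 8, e = s(i, i + 4)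

/-- An edge of `M4` is horizontal if it has the form `{i, i+1}`. -/
def IsHorizontal (e : Sym2 (Fin 8)) : Prop := ∃ i : Fin 8, e = s(i, i + 1)

/-- `E` is the edge set of a Hamiltonian cycle of `M4`. -/
def IsHamEdgeSet (E : Set (Sym2 (Fin 8))) : Prop :=
  ∃ (v : Fin 8) (w : M4.Walk v v), w.IsHamiltonianCycle ∧ E = {e | e ∈ w.edges}

instance : DecidableRel M4.Adj := fun a b =>
  decidable_of_iff (a ≠ b ∧ ((b = a + 1 ∨ b = a + 4) ∨ (a = b + 1 ∨ a = b + 4))) Iff.rfl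

instance : DecidablePred IsRung := fun e => by unfold IsRung; infer_instance

/-- The finset of the 8 horizontal edges. -/
def Hfin : Finset (Sym2 (Fin 8)) := (Finset.univ : Finset (Fin 8)).image fun i => s(i, i+1)

lemma memA : ∀ i : Fin 8, i ∈ s(i, i+1) ∧ i ∈ s(i+7, i) ∧ i ∈ s(i, i+4) := by decide

lemma memB : ∀ i : Fin 8, (i+4) ∈ s(i+4, i+5) ∧ (i+4) ∈ s(i+3, i+4) ∧ (i+4) ∈ s(i, i+4) := by
  decide

lemma card3A : ∀ i : Fin 8,
    ({s(i,i+1), s(i+7,i), s(i,i+4)} : Finset (Sym2 (Fin 8))).card = 3 := by decide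

lemma card3B : ∀ i : Fin 8,
    ({s(i+4,i+5), s(i+3,i+4), s(i,i+4)} : Finset (Sym2 (Fin 8))).card = 3 := by decide

lemma memH : ∀ i : Fin 8,
    s(i,i+1) ∈ Hfin ∧ s(i+7,i) ∈ Hfin ∧ s(i+4,i+5) ∈ Hfin ∧ s(i+3,i+4) ∈ Hfin := by decide

lemma neH : ∀ i : Fin 8, s(i,i+1) ≠ s(i+4,i+5) ∧ s(i,i+1) ≠ s(i+3,i+4) ∧ s(i+7,i) ≠ s(i+4,i+5)
    ∧ s(i+7,i) ≠ s(i+3,i+4) := by decide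

lemma horiz_of_not_rung : ∀ e ∈ M4.edgeFinset, ¬ IsRung e → e ∈ Hfin := by decide

lemma countP_mem_edge (x : Fin 8) (l : List M4.Dart) :
    (l.map SimpleGraph.Dart.edge).countP (fun e => decide (x ∈ e))
      = (l.map (·.toProd.1)).count x + (l.map (·.toProd.2)).count x := by
  induction l with
  | nil => simp
  | cons d l ih =>
    have hne : d.toProd.1 ≠ d.toProd.2 := d.adj.ne
    have hmem : (x ∈ d.edge) ↔ (x = d.toProd.1 ∨ x = d.toProd.2) := by
      rw [SimpleGraph.Dart.edge, Sym2.mem_iff]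
    simp only [List.map_cons, List.countP_cons, List.count_cons, ih, decide_eq_true_eq, hmem,
      beq_iff_eq]
    rcases eq_or_ne x d.toProd.1 with h1 | h1 <;> rcases eq_or_ne x d.toProd.2 with h2 | h2
    · exact absurd (h1.symm.trans h2) hne
    · rw [if_pos (Or.inl h1), if_pos h1.symm, if_neg (fun h => h2 h.symm)]; omega
    · rw [if_pos (Or.inr h2), if_neg (fun h => h1 h.symm), if_pos h2.symm]; omega
    · rw [if_neg (by tauto), if_neg (fun h => h1 h.symm), if_neg (fun h => h2 h.symm)]; omega

/-- In a Hamiltonian cycle of `M4`, every vertex lies on exactly two edges. -/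
lemma degree_two {v : Fin 8} {w : M4.Walk v v} (hw : w.IsHamiltonianCycle) (x : Fin 8) :
    (w.edges.toFinset.filter (fun e => x ∈ e)).card = 2 := by
  classical
  have hnodup : w.edges.Nodup := hw.isCycle.edges_nodup
  have hfe : (w.edges.toFinset.filter (fun e => x ∈ e))
      = (w.edges.filter (fun e => decide (x ∈ e))).toFinset := by
    ext e; simp
  rw [hfe, List.card_toFinset, (hnodup.filter _).dedup, ← List.countP_eq_length_filter]
  rw [Walk.edges, countP_mem_edge]
  have hfst : (w.darts.map (·.toProd.1)).count x = 1 := by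
    have happ := w.map_fst_darts_append
    have : (w.darts.map (·.fst) ++ [v]).count x = w.support.count x := by rw [happ]
    rw [List.count_append] at this
    rcases eq_or_ne x v with h | h
    · rw [h] at this ⊢
      rw [hw.count_support_self] at this
      simpa using this
    · rw [hw.support_count_of_ne h.symm] at this
      simpa [List.count_cons, List.count_nil, Ne.symm h] using this
  have hsnd : (w.darts.map (·.toProd.2)).count x = 1 := by
    rw [w.map_snd_darts, ← Walk.support_tail_of_not_nil w hw.isCycle.not_nil]
    exact hw.isHamiltonian_tail x
  rw [hfst, hsnd]

/-- `M4` has no Hamiltonian cycle containing exactly one rung. -/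
theorem no_ham_cycle_one_rung :
    ¬ ∃ E : Set (Sym2 (Fin 8)), IsHamEdgeSet E ∧ {e ∈ E | IsRung e}.ncard = 1 := by
  classical
  rintro ⟨E, ⟨v, w, hw, rfl⟩, hone⟩
  set F : Finset (Sym2 (Fin 8)) := w.edges.toFinset with hF
  have hEset : {e ∈ {e | e ∈ w.edges} | IsRung e} = ↑(F.filter (fun e => IsRung e)) := by
    ext e; simp [hF]
  rw [hEset, Set.ncard_coe_finset] at hone
  obtain ⟨r, hr⟩ := Finset.card_eq_one.mp hone
  have hrmem : r ∈ F.filter (fun e => IsRung e) := hr ▸ Finset.mem_singleton_self r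
  rw [Finset.mem_filter] at hrmem
  obtain ⟨i, rfl⟩ := hrmem.2
  have hrF : s(i, i + 4) ∈ F := hrmem.1
  have hsub : F ⊆ M4.edgeFinset := fun e he =>
    mem_edgeFinset.mpr (w.edges_subset_edgeSet (List.mem_toFinset.mp he))
  have hcard8 : F.card = 8 := by
    rw [hF, List.card_toFinset, hw.isCycle.edges_nodup.dedup, w.length_edges, hw.length_eq]
    rfl
  -- one of the two horizontal edges at `i` is missing from `F`, similarly at `i+4`
  have hmissA : s(i, i+1) ∉ F ∨ s(i+7, i) ∉ F := by
    by_contra h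
    push_neg at h
    have hsub3 : ({s(i,i+1), s(i+7,i), s(i,i+4)} : Finset (Sym2 (Fin 8)))
        ⊆ F.filter (fun e => i ∈ e) := by
      intro e he
      simp only [Finset.mem_insert, Finset.mem_singleton] at he
      rcases he with rfl | rfl | rfl
      · exact Finset.mem_filter.mpr ⟨h.1, (memA i).1⟩
      · exact Finset.mem_filter.mpr ⟨h.2, (memA i).2.1⟩
      · exact Finset.mem_filter.mpr ⟨hrF, (memA i).2.2⟩
    have hle := Finset.card_le_card hsub3
    rw [card3A i, degree_two hw i] at hle
    omega
  have hmissB : s(i+4, i+5) ∉ F ∨ s(i+3, i+4) ∉ F := by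
    by_contra h
    push_neg at h
    have hsub3 : ({s(i+4,i+5), s(i+3,i+4), s(i,i+4)} : Finset (Sym2 (Fin 8)))
        ⊆ F.filter (fun e => (i+4) ∈ e) := by
      intro e he
      simp only [Finset.mem_insert, Finset.mem_singleton] at he
      rcases he with rfl | rfl | rfl
      · exact Finset.mem_filter.mpr ⟨h.1, (memB i).1⟩
      · exact Finset.mem_filter.mpr ⟨h.2, (memB i).2.1⟩
      · exact Finset.mem_filter.mpr ⟨hrF, (memB i).2.2⟩
    have hle := Finset.card_le_card hsub3
    rw [card3B i, degree_two hw (i+4)] at hle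
    omega
  -- at most one horizontal edge is missing from `F`
  have hmiss1 : (Hfin \ F).card ≤ 1 := by
    have hsplit := Finset.card_filter_add_card_filter_not
      (s := F) (p := fun e => IsRung e)
    rw [hone, hcard8] at hsplit
    have hsubH : F.filter (fun e => ¬ IsRung e) ⊆ Hfin ∩ F := by
      intro e he
      rw [Finset.mem_filter] at he
      have heE : e ∈ M4.edgeFinset := hsub he.1
      exact Finset.mem_inter.mpr ⟨horiz_of_not_rung e heE he.2, he.1⟩
    have h7 : 7 ≤ (Hfin ∩ F).card := by
      have := Finset.card_le_card hsubH
      omega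
    have hsd := Finset.card_inter_add_card_sdiff Hfin F
    have hH8 : Hfin.card = 8 := by decide
    have hIle : (Hfin ∩ F).card ≤ 8 := by
      calc (Hfin ∩ F).card ≤ Hfin.card := Finset.card_le_card Finset.inter_subset_left
        _ = 8 := hH8
    omega
  -- but the two missing horizontals are distinct horizontals: contradiction
  have hHmem := memH i
  have hne := neH i
  rw [Finset.card_le_one] at hmiss1
  rcases hmissA with ha | ha <;> rcases hmissB with hb | hb
  · exact hne.1 (hmiss1 _ (Finset.mem_sdiff.mpr ⟨hHmem.1, ha⟩)
      _ (Finset.mem_sdiff.mpr ⟨hHmem.2.2.1, hb⟩))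
  · exact hne.2.1 (hmiss1 _ (Finset.mem_sdiff.mpr ⟨hHmem.1, ha⟩)
      _ (Finset.mem_sdiff.mpr ⟨hHmem.2.2.2, hb⟩))
  · exact hne.2.2.1 (hmiss1 _ (Finset.mem_sdiff.mpr ⟨hHmem.2.1, ha⟩)
      _ (Finset.mem_sdiff.mpr ⟨hHmem.2.2.1, hb⟩))
  · exact hne.2.2.2 (hmiss1 _ (Finset.mem_sdiff.mpr ⟨hHmem.2.1, ha⟩)
      _ (Finset.mem_sdiff.mpr ⟨hHmem.2.2.2, hb⟩))
end

section
/- The Möbius ladder M4 on 8 vertices has no Hamiltonian cycle containing exactly three of the four rungs. -/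
open SimpleGraph

/-- Parity of an edge: sum of the endpoint values mod 2. -/
def pe (e : Sym2 (Fin 8)) : ZMod 2 :=
  Sym2.lift ⟨fun a b => (a.val : ZMod 2) + (b.val : ZMod 2), by intro a b; ring⟩ e

instance inst_s4 : DecidablePred IsRung := fun _ => Fintype.decidableExistsFintype

instance inst_s4_2 : DecidableRel M4.Adj := fun a b =>
  decidable_of_iff _ (SimpleGraph.fromRel_adj _ a b).symm

lemma two_eq_zero : (2 : ZMod 2) = 0 := rfl

lemma pe_sum {u v : Fin 8} (w : M4.Walk u v) :
    (w.edges.map pe).sum = (u.val : ZMod 2) + (v.val : ZMod 2) := by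
  induction w with
  | nil =>
    simp only [Walk.edges_nil, List.map_nil, List.sum_nil, ← two_mul, two_eq_zero, zero_mul]
  | cons h p ih =>
    simp only [Walk.edges_cons, List.map_cons, List.sum_cons, ih, pe, Sym2.lift_mk]
    ring_nf
    rw [two_eq_zero]
    ring

lemma edge_class : ∀ a b : Fin 8, M4.Adj a b →
    pe s(a, b) = if IsRung s(a, b) then 0 else 1 := by decide

lemma sum_pe_eq (l : List (Sym2 (Fin 8)))
    (h : ∀ e ∈ l, pe e = if IsRung e then 0 else 1) :
    (l.map pe).sum = (l.countP (fun e => !decide (IsRung e)) : ZMod 2) := by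
  induction l with
  | nil => simp
  | cons a t ih =>
    rw [List.map_cons, List.sum_cons, List.countP_cons,
      ih (fun e he => h e (List.mem_cons_of_mem a he)), h a List.mem_cons_self]
    by_cases hr : IsRung a <;> simp [hr] <;> ring

/-- `M4` has no Hamiltonian cycle containing exactly three of the four rungs. -/
theorem no_ham_cycle_three_rungs :
    ¬ ∃ E : Set (Sym2 (Fin 8)), IsHamEdgeSet E ∧ {e ∈ E | IsRung e}.ncard = 3 := by
  rintro ⟨E, ⟨v, w, hw, rfl⟩, h3⟩
  set L := w.edges with hL
  have hnodup : L.Nodup := hw.isCycle.edges_nodup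
  have hlen : L.length = 8 := by
    rw [hL, Walk.length_edges, hw.length_eq, Fintype.card_fin]
  have hclass : ∀ e ∈ L, pe e = if IsRung e then 0 else 1 := by
    intro e he
    have hmem : e ∈ M4.edgeSet := Walk.edges_subset_edgeSet w he
    induction e with
    | h a b => exact edge_class a b hmem
  -- the number of non-rung (horizontal) edges is even
  have hzero : ((L.countP (fun e => !decide (IsRung e))) : ZMod 2) = 0 := by
    rw [← sum_pe_eq L hclass, pe_sum, ← two_mul, two_eq_zero, zero_mul]
  have heven : 2 ∣ L.countP (fun e => !decide (IsRung e)) :=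
    (ZMod.natCast_eq_zero_iff _ 2).mp hzero
  -- the set in question
  have hset : {e ∈ {e | e ∈ L} | IsRung e} =
      ↑(L.filter (fun e => decide (IsRung e))).toFinset := by
    ext e
    simp [List.mem_filter]
  have hcard : (L.filter (fun e => decide (IsRung e))).toFinset.card
      = L.countP (fun e => decide (IsRung e)) := by
    rw [List.toFinset_card_of_nodup (hnodup.filter _), ← List.countP_eq_length_filter]
  have hr3 : L.countP (fun e => decide (IsRung e)) = 3 := by
    rw [← hcard, ← Set.ncard_coe_finset, ← hset]
    exact h3
  have hsplit : L.countP (fun e => decide (IsRung e))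
      + L.countP (fun e => !decide (IsRung e)) = L.length := by
    simpa using (List.length_eq_countP_add_countP (fun e => decide (IsRung e)) (l := L)).symm
  omega
end
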